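/- arXiv:2504.21059 — 7 statements merged into one kernel-verified Lean document; each statement's English description precedes it below -/
import Mathlib

section
/- For every positive rational number r, there exists a finite simple undirected graph Γ = (V, E) such that |Aut(Γ)| / |V| = r, where Aut(Γ) is the group of graph automorphisms of Γ. -/
/-!
Take the complete graph on `Option (Fin k)` and attach a path with `m + 1` vertices to the hub
`none`. For `k ≥ 2` exactly the clique vertices lie in triangles, so every automorphism preserves
the clique and the path; it then fixes the unique clique–path edge and, walking along the path,
every path vertex. The remaining `k` clique vertices are pairwise adjacent twins, so they may be
permuted freely: `|Aut| = k!` and `|V| = k + m + 2`. Writing `r = p / q`, take `k = p + 4`; then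
`k! = p c` with `c ≥ k + 2`, and `m` with `k + m + 2 = q c` gives `|Aut| / |V| = p / q`.
-/

open Equiv Sum

namespace SimpleGraph

variable {V : Type*} {G : SimpleGraph V}

structure IsCliqueModule (G : SimpleGraph V) (S : Set V) : Prop where
  isClique : G.IsClique S
  adj_iff_adj : ∀ x ∈ S, ∀ y ∈ S, ∀ z ∉ S, G.Adj x z ↔ G.Adj y z

namespace IsCliqueModule

variable {S : Set V}

theorem adj_perm_apply_iff (hS : G.IsCliqueModule S) (σ : Perm V) (hσ : ∀ v ∉ S, σ v = v)
    (v w : V) : G.Adj (σ v) (σ w) ↔ G.Adj v w := by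
  have hmem : ∀ v, σ v ∈ S ↔ v ∈ S := fun v => by
    refine ⟨fun h => ?_, fun h => ?_⟩
    · by_contra hv
      exact hv (hσ v hv ▸ h)
    · by_contra hσv
      rw [σ.injective (hσ _ hσv)] at hσv
      exact hσv h
  have adj_iff_ne {x y : V} (hx : x ∈ S) (hy : y ∈ S) : G.Adj x y ↔ x ≠ y :=
    ⟨G.ne_of_adj, hS.isClique hx hy⟩
  by_cases hv : v ∈ S <;> by_cases hw : w ∈ S
  · rw [adj_iff_ne ((hmem v).2 hv) ((hmem w).2 hw), adj_iff_ne hv hw, σ.injective.ne_iff]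
  · rw [hσ w hw]
    exact hS.adj_iff_adj _ ((hmem v).2 hv) _ hv _ hw
  · rw [hσ v hv, G.adj_comm, G.adj_comm v]
    exact hS.adj_iff_adj _ ((hmem w).2 hw) _ hw _ hv
  · rw [hσ v hv, hσ w hw]

def isoSelfEquivPermFixing (hS : G.IsCliqueModule S)
    (hrigid : ∀ f : G ≃g G, ∀ v ∉ S, f v = v) :
    (G ≃g G) ≃ {σ : Perm V // ∀ v ∉ S, σ v = v} where
  toFun f := ⟨f.toEquiv, hrigid f⟩
  invFun σ := ⟨σ.1, hS.adj_perm_apply_iff σ.1 σ.2 _ _⟩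

theorem card_iso_self [Finite V] (hS : G.IsCliqueModule S)
    (hrigid : ∀ f : G ≃g G, ∀ v ∉ S, f v = v) :
    Nat.card (G ≃g G) = (Nat.card S).factorial := by
  classical
  rw [← Nat.card_perm, Nat.card_congr ((hS.isoSelfEquivPermFixing hrigid).trans
    (Perm.subtypeEquivSubtypePerm (· ∈ S)).symm)]

end IsCliqueModule

def IsInTriangle (G : SimpleGraph V) (x : V) : Prop :=
  ∃ a b, G.Adj x a ∧ G.Adj x b ∧ G.Adj a b

theorem IsInTriangle.map {W : Type*} {H : SimpleGraph W} (f : G →g H) {x : V}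
    (h : G.IsInTriangle x) : H.IsInTriangle (f x) :=
  let ⟨a, b, hxa, hxb, hab⟩ := h
  ⟨f a, f b, f.map_adj hxa, f.map_adj hxb, f.map_adj hab⟩

def cliqueWithTail (α : Type*) (m : ℕ) : SimpleGraph (Option α ⊕ Fin (m + 1)) :=
  (⊤ ⊕g pathGraph (m + 1)) ⊔ edge (inl none) (inr 0)

namespace cliqueWithTail

variable {α : Type*} {m : ℕ}

@[simp] theorem adj_inl_inl {o o' : Option α} :
    (cliqueWithTail α m).Adj (inl o) (inl o') ↔ o ≠ o' := by
  simp [cliqueWithTail, edge_adj]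

@[simp] theorem adj_inl_inr {o : Option α} {j : Fin (m + 1)} :
    (cliqueWithTail α m).Adj (inl o) (inr j) ↔ o = none ∧ j = 0 := by
  simp [cliqueWithTail, edge_adj]

@[simp] theorem adj_inr_inl {o : Option α} {j : Fin (m + 1)} :
    (cliqueWithTail α m).Adj (inr j) (inl o) ↔ o = none ∧ j = 0 := by
  rw [adj_comm, adj_inl_inr]

@[simp] theorem adj_inr_inr {i j : Fin (m + 1)} :
    (cliqueWithTail α m).Adj (inr i) (inr j) ↔ i.val + 1 = j.val ∨ j.val + 1 = i.val := by
  simp [cliqueWithTail, edge_adj, pathGraph_adj]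

theorem isCliqueModule_range_some :
    (cliqueWithTail α m).IsCliqueModule (Set.range fun a => inl (some a)) where
  isClique := by
    rintro _ ⟨a, rfl⟩ _ ⟨b, rfl⟩ hab
    simpa using hab
  adj_iff_adj := by
    rintro _ ⟨a, rfl⟩ _ ⟨b, rfl⟩ ((_ | c) | j) hz
    · simp
    · exact absurd ⟨c, rfl⟩ hz
    · simp

theorem isInTriangle_inl [Nontrivial α] (o : Option α) :
    (cliqueWithTail α m).IsInTriangle (inl o) := by
  obtain ⟨a, b, hab⟩ := exists_pair_ne α
  cases o with
  | none => exact ⟨inl (some a), inl (some b), by simp, by simp, by simpa using hab⟩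
  | some c =>
    obtain ⟨d, hdc⟩ := exists_ne c
    exact ⟨inl none, inl (some d), by simp, by simpa using hdc.symm, by simp⟩

theorem not_isInTriangle_inr (j : Fin (m + 1)) :
    ¬ (cliqueWithTail α m).IsInTriangle (inr j) := by
  rintro ⟨a | a, b | b, hja, hjb, hab⟩ <;>
    simp only [adj_inl_inl, adj_inl_inr, adj_inr_inl, adj_inr_inr, Fin.ext_iff, Fin.val_zero]
      at hja hjb hab <;> grind

variable [Nontrivial α] (f : cliqueWithTail α m ≃g cliqueWithTail α m)

theorem iso_apply_inl (o : Option α) : ∃ o', f (inl o) = inl o' := by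
  rcases h : f (inl o) with o' | j
  · exact ⟨o', rfl⟩
  · exact absurd (h ▸ (isInTriangle_inl o).map f.toHom) (not_isInTriangle_inr j)

theorem iso_apply_inr (j : Fin (m + 1)) : ∃ j', f (inr j) = inr j' := by
  rcases h : f (inr j) with o | j'
  · have := (isInTriangle_inl (m := m) o).map f.symm.toHom
    rw [← h] at this
    exact absurd (by simpa using this) (not_isInTriangle_inr j)
  · exact ⟨j', rfl⟩

theorem iso_apply_inl_none_and_inr_zero : f (inl none) = inl none ∧ f (inr 0) = inr 0 := by
  obtain ⟨o, ho⟩ := iso_apply_inl f none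
  obtain ⟨j, hj⟩ := iso_apply_inr f 0
  have := f.map_adj_iff.mpr
    (adj_inl_inr.mpr ⟨rfl, rfl⟩ : (cliqueWithTail α m).Adj (inl none) (inr 0))
  rw [ho, hj, adj_inl_inr] at this
  rw [ho, hj, this.1, this.2]
  exact ⟨rfl, rfl⟩

theorem iso_apply_inr_eq (j : Fin (m + 1)) : f (inr j) = inr j := by
  induction j using WellFoundedLT.induction with
  | _ j ih =>
  obtain ⟨j', hj'⟩ := iso_apply_inr f j
  rcases Nat.eq_zero_or_pos j.val with h0 | hpos
  · rw [show j = 0 from Fin.ext h0]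
    exact (iso_apply_inl_none_and_inr_zero f).2
  let i : Fin (m + 1) := ⟨j.val - 1, by omega⟩
  have hij : (cliqueWithTail α m).Adj (inr i) (inr j) :=
    adj_inr_inr.mpr (Or.inl (show j.val - 1 + 1 = j.val by omega))
  have hadj := f.map_adj_iff.mpr hij
  rw [ih i (Fin.lt_def.mpr (show j.val - 1 < j.val by omega)), hj', adj_inr_inr] at hadj
  rw [hj']
  rcases hadj with h | h
  · exact congrArg inr (Fin.ext (by simp [i] at h; omega))
  · -- `f (inr j)` would be the already fixed vertex `inr (j - 2)`
    have := (ih j' (Fin.lt_def.mpr (by simp [i] at h; omega))).trans hj'.symm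
    rw [inr_injective (f.injective this)]

theorem iso_apply_eq_of_notMem (v : Option α ⊕ Fin (m + 1))
    (hv : v ∉ Set.range fun a => inl (some a)) : f v = v := by
  rcases v with (_ | a) | j
  · exact (iso_apply_inl_none_and_inr_zero f).1
  · exact absurd ⟨a, rfl⟩ hv
  · exact iso_apply_inr_eq f j

end cliqueWithTail

theorem card_iso_self_cliqueWithTail (α : Type*) [Finite α] [Nontrivial α] (m : ℕ) :
    Nat.card (cliqueWithTail α m ≃g cliqueWithTail α m) = (Nat.card α).factorial := by
  rw [cliqueWithTail.isCliqueModule_range_some.card_iso_self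
    cliqueWithTail.iso_apply_eq_of_notMem,
    Nat.card_range_of_injective (f := fun a : α => (inl (some a) : Option α ⊕ Fin (m + 1)))
      fun a b h => by simpa using h]

end SimpleGraph

open Nat in
theorem exists_factorial_div_eq (r : ℚ) (hr : 0 < r) :
    ∃ k m : ℕ, 2 ≤ k ∧ (k ! : ℚ) / (k + 1 + (m + 1)) = r := by
  obtain ⟨p, hp⟩ := Int.eq_ofNat_of_zero_le (Rat.num_nonneg.mpr hr.le)
  have hp0 : 0 < p := by have := Rat.num_pos.mpr hr; omega
  set q := r.den
  obtain ⟨c, hc⟩ : p ∣ (p + 4)! := Nat.dvd_factorial hp0 (by omega)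
  have hfac : p * (p + 6) ≤ (p + 4)! :=
    calc p * (p + 6) ≤ (p + 4) * (p + 3) := by nlinarith
      _ ≤ (p + 4) * (p + 3) * (p + 2)! := Nat.le_mul_of_pos_right _ (p + 2).factorial_pos
      _ = (p + 4)! := by
        rw [show p + 4 = p + 2 + 1 + 1 from rfl, factorial_succ (p + 2 + 1),
          factorial_succ (p + 2)]
        ring
  have hpc : p + 6 ≤ c := Nat.le_of_mul_le_mul_left (hc ▸ hfac) hp0
  have hqc : c ≤ q * c := Nat.le_mul_of_pos_left c r.den_pos
  refine ⟨p + 4, q * c - (p + 6), by omega, ?_⟩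
  have hcard : ((p + 4 : ℕ) : ℚ) + 1 + ((q * c - (p + 6) : ℕ) + 1) = q * c := by
    rw [Nat.cast_sub (by omega)]
    push_cast
    ring
  have hc0 : (c : ℚ) ≠ 0 := by norm_cast; omega
  rw [hcard, hc, Nat.cast_mul, mul_div_mul_right _ _ hc0, ← Rat.num_div_den r, hp]
  rfl

/-- For every positive rational `r`, there is a finite simple graph `Γ = (V, E)`
with `|Aut Γ| / |V| = r`. -/
theorem exists_graph_aut_card_div_vertex_card_eq (r : ℚ) (hr : 0 < r) :
    ∃ (V : Type) (G : SimpleGraph V), Finite V ∧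
      (Nat.card (G ≃g G) : ℚ) / (Nat.card V : ℚ) = r := by
  obtain ⟨k, m, hk, hkm⟩ := exists_factorial_div_eq r hr
  have : Nontrivial (Fin k) := Fin.nontrivial_iff_two_le.mpr hk
  refine ⟨_, SimpleGraph.cliqueWithTail (Fin k) m, inferInstance, ?_⟩
  rw [SimpleGraph.card_iso_self_cliqueWithTail]
  simpa [Nat.card_eq_fintype_card] using hkm
end

section
/- For every positive rational number r, there exists a finite simple undirected graph Γ = (V, E) such that |Aut(Γ)| / (|V| + |E|) = r. -/
/-!
Give the vertices natural-number weights and join two distinct vertices when their weights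
sum to more than `2s`. Vertices of equal weight are twins, so every weight-preserving
permutation is an automorphism; conversely, if the degree is a strictly increasing function
of the weight, every automorphism preserves weights. Taking one vertex of each weight
`0, …, 2s`, plus `m` extra vertices of weight `s` and one extra vertex of each weight in a
set `D ⊆ [0, s)` with `|D| = 3`, gives `|Aut| = 8 (m+1)!` and
`|V| + |E| = (s+1)(s+m+1) + |D| + ∑ D`. For `r = p/q` choose `m + 1 ≥ p`, so that
`(m+1)! = p k`; every sufficiently large integer, in particular `8 k q`, has the form
`(s+1)(s+m+1) + 3 + ∑ D`, and then `|Aut| / (|V| + |E|) = 8 p k / 8 k q = r`.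
-/

open Finset
open scoped Nat

namespace SimpleGraph

variable {V : Type*}

def thresholdGraph (w : V → ℕ) (t : ℕ) : SimpleGraph V where
  Adj x y := x ≠ y ∧ t < w x + w y
  symm := ⟨fun _ _ h => ⟨h.1.symm, by rw [add_comm]; exact h.2⟩⟩
  loopless := ⟨fun _ h => h.1 rfl⟩

variable {w : V → ℕ} {t : ℕ}

@[simp]
lemma thresholdGraph_adj {x y : V} : (thresholdGraph w t).Adj x y ↔ x ≠ y ∧ t < w x + w y :=
  Iff.rfl

instance [DecidableEq V] : DecidableRel (thresholdGraph w t).Adj :=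
  fun _ _ => inferInstanceAs (Decidable (_ ∧ _))

def thresholdGraph.autOfWeightEq (σ : Equiv.Perm V) (hσ : ∀ x, w (σ x) = w x) :
    thresholdGraph w t ≃g thresholdGraph w t where
  toEquiv := σ
  map_rel_iff' := by simp [hσ]

variable [Fintype V] [DecidableEq V]

lemma degree_thresholdGraph_add (x : V) :
    (thresholdGraph w t).degree x + (if t < w x + w x then 1 else 0) = #{y | t < w x + w y} := by
  have : (thresholdGraph w t).neighborFinset x = ({y | t < w x + w y} : Finset V).erase x := by
    ext y; simp [eq_comm]
  rw [← card_neighborFinset_eq_degree, this, card_erase_eq_ite]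
  by_cases h : t < w x + w x
  · have hx : x ∈ ({y | t < w x + w y} : Finset V) := by simpa
    rw [if_pos hx, if_pos h, Nat.sub_add_cancel (card_pos.2 ⟨x, hx⟩)]
  · rw [if_neg (by simpa using h), if_neg h, add_zero]

def thresholdGraph.autEquivStabilizer
    (hdeg : ∀ x y, (thresholdGraph w t).degree x = (thresholdGraph w t).degree y → w x = w y) :
    (thresholdGraph w t ≃g thresholdGraph w t) ≃ {σ : Equiv.Perm V // w ∘ σ = w} where
  toFun e := ⟨e.toEquiv, funext fun x => hdeg _ _ (e.degree_eq x)⟩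
  invFun σ := thresholdGraph.autOfWeightEq σ.1 (congrFun σ.2)
  left_inv _ := rfl
  right_inv _ := rfl

lemma card_aut_thresholdGraph
    (hdeg : ∀ x y, (thresholdGraph w t).degree x = (thresholdGraph w t).degree y → w x = w y) :
    Nat.card (thresholdGraph w t ≃g thresholdGraph w t) =
      ∏ c ∈ univ.image w, (Fintype.card {x // w x = c})! := by
  rw [Nat.card_congr (thresholdGraph.autEquivStabilizer hdeg), Nat.card_eq_fintype_card,
    DomMulAct.stabilizer_card']

end SimpleGraph

open SimpleGraph

lemma card_filter_fin_lt_add {n c : ℕ} (hc : c ≤ n + 1) : #{a : Fin (n + 1) | n < c + a} = c := by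
  rw [card_filter, Fin.sum_univ_eq_sum_range (fun a => if n < c + a then 1 else 0), ← card_filter]
  have : {a ∈ range (n + 1) | n < c + a} = Ico (n + 1 - c) (n + 1) := by
    ext a; simp only [mem_filter, mem_range, mem_Ico]; omega
  rw [this, Nat.card_Ico]; omega

section Stair

variable {ι : Type*}

def stairWeight (s : ℕ) (f : ι → ℕ) : Fin (2 * s + 1) ⊕ ι → ℕ := Sum.elim Fin.val f

def stairDegree [Fintype ι] (s : ℕ) (f : ι → ℕ) (c : ℕ) : ℕ :=
  c + #{i | 2 * s < c + f i} - if s < c then 1 else 0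

variable {s : ℕ} {f : ι → ℕ}

@[simp] lemma stairWeight_inl (a : Fin (2 * s + 1)) : stairWeight s f (.inl a) = a := rfl

@[simp] lemma stairWeight_inr (i : ι) : stairWeight s f (.inr i) = f i := rfl

variable [Fintype ι]

lemma card_filter_stairWeight {c : ℕ} (hc : c ≤ 2 * s + 1) :
    #{x | 2 * s < c + stairWeight s f x} = c + #{i | 2 * s < c + f i} := by
  rw [card_filter, Fintype.sum_sum_type, ← card_filter, ← card_filter]
  exact congrArg (· + _) (card_filter_fin_lt_add hc)

lemma stairDegree_strictMono (hs : ∃ i, f i = s) : StrictMono (stairDegree s f) := by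
  refine strictMono_nat_of_lt_succ fun c => ?_
  have hmono : #{i | 2 * s < c + f i} ≤ #{i | 2 * s < c + 1 + f i} :=
    card_le_card (monotone_filter_right _ fun i h => by omega)
  have hjump : c = s → #{i | 2 * s < c + f i} < #{i | 2 * s < c + 1 + f i} := by
    rintro rfl
    obtain ⟨i, hi⟩ := hs
    refine card_lt_card ((ssubset_iff_of_subset (monotone_filter_right _ fun i h => by omega)).2
      ⟨i, ?_, ?_⟩) <;> simp [hi] <;> omega
  unfold stairDegree
  split_ifs <;> omega

lemma card_stairWeight_fiber [DecidableEq ι] {c : ℕ} (hc : c ≤ 2 * s) :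
    Fintype.card {x // stairWeight s f x = c} = 1 + #{i | f i = c} := by
  rw [Fintype.card_subtype, card_filter, Fintype.sum_sum_type, ← card_filter, ← card_filter]
  congr 1
  rw [card_eq_one]
  refine ⟨⟨c, by omega⟩, ?_⟩
  ext a
  rw [mem_filter, mem_singleton, Fin.ext_iff]
  simp

lemma image_stairWeight (hf : ∀ i, f i ≤ s) :
    univ.image (stairWeight s f) = range (2 * s + 1) := by
  ext c
  simp only [mem_image, mem_univ, true_and, mem_range]
  constructor
  · rintro ⟨a | i, rfl⟩
    · exact a.2
    · have := hf i; simp only [stairWeight_inr]; omega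
  · intro hc; exact ⟨.inl ⟨c, hc⟩, rfl⟩

lemma sum_card_filter_stairWeight (hf : ∀ i, f i ≤ s) :
    ∑ x, #{y | 2 * s < stairWeight s f x + stairWeight s f y} =
      s * (2 * s + 1) + 2 * ∑ i, f i := by
  have hcross : ∑ a : Fin (2 * s + 1), #{i | 2 * s < a + f i} = ∑ i, f i := by
    simp_rw [card_filter]
    rw [sum_comm]
    refine sum_congr rfl fun i _ => ?_
    rw [← card_filter]
    simpa [add_comm] using card_filter_fin_lt_add (n := 2 * s) (hf i |>.trans (by omega))
  have hextra : ∀ i, #{i' | 2 * s < f i + f i'} = 0 := fun i => by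
    simp only [Finset.card_eq_zero, filter_eq_empty_iff]
    intro i' _; have := hf i; have := hf i'; omega
  have hgauss := sum_range_id_mul_two (2 * s + 1)
  calc ∑ x, #{y | 2 * s < stairWeight s f x + stairWeight s f y}
      = ∑ a : Fin (2 * s + 1), ((a : ℕ) + #{i | 2 * s < a + f i}) +
          ∑ i, (f i + #{i' | 2 * s < f i + f i'}) := by
        rw [Fintype.sum_sum_type]
        congr 1 <;> refine sum_congr rfl fun x _ => card_filter_stairWeight ?_
        · exact x.2.le
        · exact (hf x).trans (by omega)
    _ = s * (2 * s + 1) + 2 * ∑ i, f i := by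
        rw [sum_add_distrib, sum_add_distrib, hcross, Fin.sum_univ_eq_sum_range (fun a => a)]
        simp only [hextra, sum_const_zero, add_zero]
        rw [add_tsub_cancel_right] at hgauss
        linarith

variable [DecidableEq ι]

lemma degree_stair (hf : ∀ i, f i ≤ s) (x : Fin (2 * s + 1) ⊕ ι) :
    (thresholdGraph (stairWeight s f) (2 * s)).degree x = stairDegree s f (stairWeight s f x) := by
  have hx : stairWeight s f x ≤ 2 * s := by
    rcases x with a | i
    · exact Nat.lt_succ_iff.1 a.2
    · exact (hf i).trans (by omega)
  have := degree_thresholdGraph_add (w := stairWeight s f) (t := 2 * s) x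
  rw [card_filter_stairWeight (by omega)] at this
  unfold stairDegree
  split_ifs at this ⊢ <;> omega

lemma card_aut_stair (hf : ∀ i, f i ≤ s) (hs : ∃ i, f i = s) :
    Nat.card (thresholdGraph (stairWeight s f) (2 * s) ≃g thresholdGraph (stairWeight s f) (2 * s))
      = ∏ c ∈ range (2 * s + 1), (1 + #{i | f i = c})! := by
  rw [card_aut_thresholdGraph, image_stairWeight hf]
  · exact prod_congr rfl fun c hc => by rw [card_stairWeight_fiber (by simp at hc; omega)]
  · intro x y h
    rw [degree_stair hf, degree_stair hf] at h
    exact (stairDegree_strictMono hs).injective h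

lemma card_edgeSet_stair (hf : ∀ i, f i ≤ s) :
    Nat.card (thresholdGraph (stairWeight s f) (2 * s)).edgeSet = s ^ 2 + ∑ i, f i := by
  have hsum := sum_congr rfl fun x (_ : x ∈ univ) =>
    degree_thresholdGraph_add (w := stairWeight s f) (t := 2 * s) x
  rw [sum_add_distrib, sum_degrees_eq_twice_card_edges, sum_card_filter_stairWeight hf] at hsum
  have hloops : ∑ x, (if 2 * s < stairWeight s f x + stairWeight s f x then 1 else 0) = s := by
    have hi : ∀ i, ¬ 2 * s < f i + f i := fun i => by have := hf i; omega
    have ha : ∀ a : Fin (2 * s + 1), 2 * s < (a : ℕ) + a ↔ 2 * s < s + a := fun a => by omega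
    rw [Fintype.sum_sum_type]
    simp only [stairWeight_inl, stairWeight_inr, hi, if_false, sum_const_zero, add_zero, ha]
    rw [← card_filter]
    exact card_filter_fin_lt_add (by omega)
  rw [Nat.card_eq_fintype_card, ← edgeFinset_card]
  nlinarith

end Stair

section Twin

def twinWeight (s m : ℕ) (D : Finset ℕ) : Fin m ⊕ D → ℕ := Sum.elim (fun _ => s) (↑)

variable {s m : ℕ} {D : Finset ℕ}

@[simp] lemma twinWeight_inl (k : Fin m) : twinWeight s m D (.inl k) = s := rfl

@[simp] lemma twinWeight_inr (d : D) : twinWeight s m D (.inr d) = d := rfl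

lemma twinWeight_le (hD : D ⊆ range s) (i : Fin m ⊕ D) : twinWeight s m D i ≤ s := by
  rcases i with _ | ⟨d, hd⟩
  · exact le_rfl
  · exact (mem_range.1 (hD hd)).le

lemma card_filter_twinWeight_eq (c : ℕ) :
    #{i | twinWeight s m D i = c} = (if c = s then m else 0) + if c ∈ D then 1 else 0 := by
  rw [card_filter, Fintype.sum_sum_type]
  congr 1
  · simp only [twinWeight_inl, eq_comm (a := s)]
    split_ifs <;> simp
  · exact (sum_coe_sort D (fun d => if d = c then 1 else 0)).trans (sum_ite_eq' D c _)

lemma sum_twinWeight : ∑ i, twinWeight s m D i = m * s + ∑ d ∈ D, d := by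
  simp only [Fintype.sum_sum_type, twinWeight_inl, twinWeight_inr, sum_const, Finset.card_fin,
    smul_eq_mul]
  exact congrArg (m * s + ·) (sum_coe_sort D id)

lemma prod_factorial_twin (hD : D ⊆ range s) :
    ∏ c ∈ range (2 * s + 1), (1 + #{i | twinWeight s m D i = c})! = (m + 1)! * 2 ^ #D := by
  have hsD : s ∉ D := fun h => by simpa using hD h
  have hterm : ∀ c, (1 + #{i | twinWeight s m D i = c})! =
      (if c = s then (m + 1)! else 1) * (if c ∈ D then 2 else 1) := by
    intro c
    rw [card_filter_twinWeight_eq]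
    by_cases hc : c = s
    · subst hc; simp [hsD, add_comm]
    · split_ifs <;> simp_all
  rw [prod_congr rfl fun c _ => hterm c, prod_mul_distrib, prod_ite_eq' _ _ (fun _ => (m + 1)!),
    if_pos (mem_range.2 (by omega)), prod_ite_mem, prod_const,
    inter_eq_right.2 (hD.trans (range_subset_range.2 (by omega)))]

lemma card_aut_twin (hm : 0 < m) (hD : D ⊆ range s) :
    Nat.card (thresholdGraph (stairWeight s (twinWeight s m D)) (2 * s) ≃g
      thresholdGraph (stairWeight s (twinWeight s m D)) (2 * s)) = (m + 1)! * 2 ^ #D := by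
  rw [card_aut_stair (twinWeight_le hD) ⟨.inl ⟨0, hm⟩, rfl⟩, prod_factorial_twin hD]

lemma card_add_card_edgeSet_twin (hD : D ⊆ range s) :
    Nat.card (Fin (2 * s + 1) ⊕ (Fin m ⊕ D)) +
        Nat.card (thresholdGraph (stairWeight s (twinWeight s m D)) (2 * s)).edgeSet =
      (s + 1) * (s + m + 1) + #D + ∑ d ∈ D, d := by
  rw [card_edgeSet_stair (twinWeight_le hD), sum_twinWeight]
  simp only [Nat.card_eq_fintype_card, Fintype.card_sum, Fintype.card_fin, Fintype.card_coe]
  ring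

end Twin

lemma exists_eq_succ_mul_add_of_le {m N : ℕ} (hN : (m + 12) * (2 * m + 12) + 6 ≤ N) :
    ∃ s R, m + 11 ≤ s ∧ 3 ≤ R ∧ R + 6 ≤ 3 * s ∧ N = (s + 1) * (s + m + 1) + 3 + R := by
  induction N, hN using Nat.le_induction with
  | base => exact ⟨m + 11, 3, le_rfl, le_rfl, by omega, by ring⟩
  | succ N _ ih =>
    obtain ⟨s, R, hs, hR, hR', rfl⟩ := ih
    by_cases h : R + 7 ≤ 3 * s
    · exact ⟨s, R + 1, hs, by omega, h, by ring⟩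
    -- Here `R = 3 * s - 6`, and `N + 1 = (s + 2) * (s + m + 2) + 3 + (s - m - 8)`.
    · obtain ⟨t, rfl⟩ : ∃ t, s = t + m + 11 := ⟨s - m - 11, by omega⟩
      obtain rfl : R = 3 * t + 3 * m + 27 := by omega
      exact ⟨t + m + 12, t + 3, by omega, by omega, by omega, by ring⟩

lemma exists_lt_lt_lt_add_eq {s R : ℕ} (hR : 3 ≤ R) (hRs : R + 6 ≤ 3 * s) :
    ∃ a b c, a < b ∧ b < c ∧ c < s ∧ a + b + c = R := by
  rcases le_or_gt R s with h₁ | h₁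
  · exact ⟨0, 1, R - 1, by omega, by omega, by omega, by omega⟩
  rcases le_or_gt R (2 * s - 3) with h₂ | h₂
  · exact ⟨0, R - s + 1, s - 1, by omega, by omega, by omega, by omega⟩
  · exact ⟨R + 3 - 2 * s, s - 2, s - 1, by omega, by omega, by omega, by omega⟩

lemma exists_subset_range_card_eq_three_sum_eq {s R : ℕ} (hR : 3 ≤ R) (hRs : R + 6 ≤ 3 * s) :
    ∃ D ⊆ range s, #D = 3 ∧ ∑ d ∈ D, d = R := by
  obtain ⟨a, b, c, hab, hbc, hcs, rfl⟩ := exists_lt_lt_lt_add_eq hR hRs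
  refine ⟨{a, b, c}, ?_, card_eq_three.2 ⟨a, b, c, hab.ne, (hab.trans hbc).ne, hbc.ne, rfl⟩, ?_⟩
  · intro d hd; simp only [mem_insert, mem_singleton] at hd; simp only [mem_range]; omega
  · rw [sum_insert (by simp; omega), sum_insert (by simp; omega), sum_singleton, add_assoc]

lemma exists_subset_range_eq_mul_add_sum {m N : ℕ} (hN : (m + 12) * (2 * m + 12) + 6 ≤ N) :
    ∃ s, ∃ D ⊆ range s, #D = 3 ∧ N = (s + 1) * (s + m + 1) + #D + ∑ d ∈ D, d := by
  obtain ⟨s, R, -, hR, hRs, rfl⟩ := exists_eq_succ_mul_add_of_le hN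
  obtain ⟨D, hDs, hD3, rfl⟩ := exists_subset_range_card_eq_three_sum_eq hR hRs
  exact ⟨s, D, hDs, hD3, by rw [hD3]⟩

lemma quadratic_le_factorial {m : ℕ} (hm : 5 ≤ m) : (m + 12) * (2 * m + 12) + 6 ≤ 8 * m ! := by
  induction m, hm using Nat.le_induction with
  | base => decide
  | succ m hm ih =>
    rw [Nat.factorial_succ]
    nlinarith

lemma Rat.exists_nat_div_eq_of_pos {r : ℚ} (hr : 0 < r) :
    ∃ p q : ℕ, 0 < p ∧ 0 < q ∧ r = p / q := by
  obtain ⟨p, hp⟩ := Int.eq_ofNat_of_zero_le (Rat.num_pos.2 hr).le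
  refine ⟨p, r.den, by have := Rat.num_pos.2 hr; omega, r.den_pos, ?_⟩
  conv_lhs => rw [← Rat.num_div_den r, hp]
  rfl

/-- For every positive rational `r`, there is a finite simple graph `Γ = (V, E)`
with `|Aut Γ| / (|V| + |E|) = r`. -/
theorem exists_graph_aut_card_div_vertex_add_edge_card_eq (r : ℚ) (hr : 0 < r) :
    ∃ (V : Type) (G : SimpleGraph V), Finite V ∧
      (Nat.card (G ≃g G) : ℚ) / ((Nat.card V : ℚ) + (Nat.card G.edgeSet : ℚ)) = r := by
  obtain ⟨p, q, hp, hq, rfl⟩ := Rat.exists_nat_div_eq_of_pos hr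
  obtain ⟨k, hk⟩ : p ∣ (p + 6)! := Nat.dvd_factorial hp (by omega)
  have hk' : (p + 5)! ≤ k := Nat.le_of_mul_le_mul_left
    (by rw [← Nat.factorial_succ, hk]; exact Nat.mul_le_mul_right k (by omega)) (by omega)
  obtain ⟨s, D, hDs, hD3, hN⟩ := exists_subset_range_eq_mul_add_sum (m := p + 5) (N := 8 * k * q) <|
    (quadratic_le_factorial (by omega)).trans (by nlinarith)
  refine ⟨_, thresholdGraph (stairWeight s (twinWeight s (p + 5) D)) (2 * s), inferInstance, ?_⟩
  rw [← Nat.cast_add, card_add_card_edgeSet_twin hDs, ← hN, card_aut_twin (by omega) hDs, hD3, hk]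
  have : (k : ℚ) ≠ 0 := by have := Nat.factorial_pos (p + 5); norm_cast; omega
  push_cast
  field_simp
end

section
/- For integers p, q ≥ 2, the automorphism group of the graph Γ_{p,q} is isomorphic to the symmetric group Σ_p. -/
/-- The graph `Γ_{p,q}`: a star with center `c₀ = none`, spikes `c_i = some (Sum.inl i)`
for `i : Fin p`, and a tail `d_1, …, d_q` given by `d_j = some (Sum.inr j)` for `j : Fin q`.
Edges: `{c₀, c_i}` for all `i`, `{c₀, d_1}`, and `{d_j, d_{j+1}}`. -/
def starGraph (p q : ℕ) : SimpleGraph (Option (Fin p ⊕ Fin q)) :=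
  SimpleGraph.fromRel (fun u v =>
    (u = none ∧ ∃ i : Fin p, v = some (Sum.inl i)) ∨
    (u = none ∧ ∃ j : Fin q, v = some (Sum.inr j) ∧ (j : ℕ) = 0) ∨
    (∃ j k : Fin q, u = some (Sum.inr j) ∧ v = some (Sum.inr k) ∧ (k : ℕ) = (j : ℕ) + 1))

namespace StarAux
variable {p q : ℕ}

lemma adj_iff (u v : Option (Fin p ⊕ Fin q)) : (starGraph p q).Adj u v ↔ u ≠ v ∧
    (((u = none ∧ ∃ i : Fin p, v = some (Sum.inl i)) ∨
    (u = none ∧ ∃ j : Fin q, v = some (Sum.inr j) ∧ (j : ℕ) = 0) ∨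
    (∃ j k : Fin q, u = some (Sum.inr j) ∧ v = some (Sum.inr k) ∧ (k : ℕ) = (j : ℕ) + 1)) ∨
    ((v = none ∧ ∃ i : Fin p, u = some (Sum.inl i)) ∨
    (v = none ∧ ∃ j : Fin q, u = some (Sum.inr j) ∧ (j : ℕ) = 0) ∨
    (∃ j k : Fin q, v = some (Sum.inr j) ∧ u = some (Sum.inr k) ∧ (k : ℕ) = (j : ℕ) + 1))) :=
  SimpleGraph.fromRel_adj _ _ _

lemma adj_none_inl (i : Fin p) : (starGraph p q).Adj none (some (Sum.inl i)) := by
  rw [adj_iff]; exact ⟨by simp, Or.inl (Or.inl ⟨rfl, i, rfl⟩)⟩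

lemma adj_none_inr {j : Fin q} (hj : (j:ℕ) = 0) : (starGraph p q).Adj none (some (Sum.inr j)) := by
  rw [adj_iff]; exact ⟨by simp, Or.inl (Or.inr (Or.inl ⟨rfl, j, rfl, hj⟩))⟩

lemma adj_inr_inr {j k : Fin q} (h : (k:ℕ) = (j:ℕ) + 1) :
    (starGraph p q).Adj (some (Sum.inr j)) (some (Sum.inr k)) := by
  rw [adj_iff]
  refine ⟨fun he => ?_, Or.inl (Or.inr (Or.inr ⟨j, k, rfl, rfl, h⟩))⟩
  injection he with he; injection he with he; cases he; omega

lemma nbr_inl {i : Fin p} {a : Option (Fin p ⊕ Fin q)}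
    (h : (starGraph p q).Adj (some (Sum.inl i)) a) : a = none := by
  rw [adj_iff] at h
  obtain ⟨hne, h | h⟩ := h <;>
    rcases h with ⟨h, -⟩ | ⟨h, -⟩ | ⟨j', k, h, h', -⟩ <;> simp_all

lemma nbr_inr {j : Fin q} {a : Option (Fin p ⊕ Fin q)}
    (h : (starGraph p q).Adj (some (Sum.inr j)) a) :
    (a = none ∧ (j:ℕ) = 0) ∨
    (∃ k : Fin q, a = some (Sum.inr k) ∧ ((k:ℕ) = (j:ℕ)+1 ∨ (j:ℕ) = (k:ℕ)+1)) := by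
  rw [adj_iff] at h
  obtain ⟨hne, h | h⟩ := h
  · rcases h with ⟨h, -⟩ | ⟨h, -⟩ | ⟨j', k, h, h', he⟩
    · simp_all
    · simp_all
    · injection h with h; injection h with h; cases h
      exact Or.inr ⟨k, h', Or.inl he⟩
  · rcases h with ⟨h, i, h'⟩ | ⟨h, k, h', h0⟩ | ⟨j', k, h, h', he⟩
    · simp_all
    · injection h' with h'; injection h' with h'; cases h'
      exact Or.inl ⟨h, h0⟩
    · injection h' with h'; injection h' with h'; cases h'
      exact Or.inr ⟨j', h, Or.inr he⟩

lemma nbr_none {a : Option (Fin p ⊕ Fin q)}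
    (h : (starGraph p q).Adj none a) :
    (∃ i : Fin p, a = some (Sum.inl i)) ∨ (∃ j : Fin q, a = some (Sum.inr j) ∧ (j:ℕ) = 0) := by
  rw [adj_iff] at h
  obtain ⟨hne, h | h⟩ := h <;>
    rcases h with ⟨h, h'⟩ | ⟨h, h'⟩ | ⟨j', k, h, h', -⟩ <;> simp_all

lemma pigeon {x : Fin p ⊕ Fin q} {a b c : Option (Fin p ⊕ Fin q)}
    (ha : (starGraph p q).Adj (some x) a) (hb : (starGraph p q).Adj (some x) b)
    (hc : (starGraph p q).Adj (some x) c) : a = b ∨ a = c ∨ b = c := by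
  rcases x with i | j
  · left; rw [nbr_inl ha, nbr_inl hb]
  · rcases nbr_inr ha with ⟨ha', hj⟩ | ⟨ka, ha', hka⟩ <;>
    rcases nbr_inr hb with ⟨hb', hj'⟩ | ⟨kb, hb', hkb⟩ <;>
    rcases nbr_inr hc with ⟨hc', hj''⟩ | ⟨kc, hc', hkc⟩ <;>
      subst_vars <;> simp_all [Fin.ext_iff] <;> omega

lemma fix_none (hp : 2 ≤ p) (hq : 2 ≤ q) (f : starGraph p q ≃g starGraph p q) :
    f none = none := by
  cases hfn : f none with
  | none => rfl
  | some x =>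
    exfalso
    have Ha : (starGraph p q).Adj (f none) (f (some (Sum.inl ⟨0, by omega⟩))) :=
      f.map_adj_iff.2 (adj_none_inl _)
    have Hb : (starGraph p q).Adj (f none) (f (some (Sum.inl ⟨1, by omega⟩))) :=
      f.map_adj_iff.2 (adj_none_inl _)
    have Hc : (starGraph p q).Adj (f none) (f (some (Sum.inr ⟨0, by omega⟩))) :=
      f.map_adj_iff.2 (adj_none_inr rfl)
    rw [hfn] at Ha Hb Hc
    rcases pigeon Ha Hb Hc with h | h | h <;>
      · have := f.injective h; simp_all [Fin.ext_iff]

lemma spike_to_spike (hp : 2 ≤ p) (hq : 2 ≤ q) (f : starGraph p q ≃g starGraph p q) (i : Fin p) :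
    ∃ i' : Fin p, f (some (Sum.inl i)) = some (Sum.inl i') := by
  have hA : (starGraph p q).Adj none (f (some (Sum.inl i))) := by
    have := f.map_adj_iff.2 (adj_none_inl i (q := q))
    rwa [fix_none hp hq f] at this
  rcases nbr_none hA with ⟨i', hi'⟩ | ⟨j, hj, hj0⟩
  · exact ⟨i', hi'⟩
  · exfalso
    have h1 : (starGraph p q).Adj (some (Sum.inr j)) none := (adj_none_inr hj0).symm
    have h2 : (starGraph p q).Adj (some (Sum.inr j)) (some (Sum.inr ⟨1, by omega⟩)) :=
      adj_inr_inr (by simp [hj0])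
    rw [← hj] at h1 h2
    have g1 : (starGraph p q).Adj (f.symm (f (some (Sum.inl i)))) (f.symm none) :=
      f.symm.map_adj_iff.2 h1
    have g2 : (starGraph p q).Adj (f.symm (f (some (Sum.inl i))))
        (f.symm (some (Sum.inr ⟨1, by omega⟩))) := f.symm.map_adj_iff.2 h2
    rw [f.symm_apply_apply] at g1 g2
    have e1 := nbr_inl g1
    have e2 := nbr_inl g2
    have := f.symm.injective (e1.trans e2.symm)
    simp at this

lemma fix_inr (hp : 2 ≤ p) (hq : 2 ≤ q) (f : starGraph p q ≃g starGraph p q) :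
    ∀ (n : ℕ) (j : Fin q), (j:ℕ) = n → f (some (Sum.inr j)) = some (Sum.inr j) := by
  intro n
  induction n using Nat.strong_induction_on with
  | _ n IH =>
  intro j hj
  match n, hj with
  | 0, hj =>
    have hA : (starGraph p q).Adj none (f (some (Sum.inr j))) := by
      have := f.map_adj_iff.2 (adj_none_inr hj (p := p))
      rwa [fix_none hp hq f] at this
    rcases nbr_none hA with ⟨i', hi'⟩ | ⟨k, hk, hk0⟩
    · exfalso
      obtain ⟨i'', hi''⟩ := spike_to_spike hp hq f.symm i'
      rw [← hi', f.symm_apply_apply] at hi''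
      simp at hi''
    · rw [hk]
      congr 2
      exact Fin.ext (by omega)
  | (m+1), hj =>
    have hmq : m < q := by omega
    have hprev : f (some (Sum.inr ⟨m, hmq⟩)) = some (Sum.inr ⟨m, hmq⟩) :=
      IH m (by omega) _ rfl
    have hA : (starGraph p q).Adj (some (Sum.inr ⟨m, hmq⟩)) (f (some (Sum.inr j))) := by
      have := f.map_adj_iff.2 (adj_inr_inr (j := ⟨m, hmq⟩) (k := j) (by simp [hj]) (p := p))
      rwa [hprev] at this
    rcases nbr_inr hA with ⟨hnone, -⟩ | ⟨k, hk, hkv⟩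
    · exfalso
      have := f.injective (hnone.trans (fix_none hp hq f).symm)
      simp at this
    · rcases hkv with hkv | hkv
      · rw [hk]; congr 2; exact Fin.ext (by simp at hkv ⊢; omega)
      · exfalso
        simp only [Fin.val_mk] at hkv
        have hkq : (k:ℕ) < q := k.isLt
        have hkm : (k:ℕ) < m + 1 := by omega
        have hk' : f (some (Sum.inr k)) = some (Sum.inr k) := IH (k:ℕ) (by omega) _ rfl
        have := f.injective (hk.trans hk'.symm)
        injection this with this; injection this with this; cases this
        omega

/-- extract the spike index -/
def ext' (hp : 2 ≤ p) : Option (Fin p ⊕ Fin q) → Fin p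
  | some (Sum.inl i) => i
  | _ => ⟨0, by omega⟩

lemma ext'_spec (hp : 2 ≤ p) (i : Fin p) :
    ext' hp (some (Sum.inl i) : Option (Fin p ⊕ Fin q)) = i := rfl

lemma apply_inl (hp : 2 ≤ p) (hq : 2 ≤ q) (f : starGraph p q ≃g starGraph p q) (i : Fin p) :
    f (some (Sum.inl i)) = some (Sum.inl (ext' hp (f (some (Sum.inl i))))) := by
  obtain ⟨i', h⟩ := spike_to_spike hp hq f i
  rw [h, ext'_spec]

/-- restriction of an automorphism to the spikes -/
def toPerm (hp : 2 ≤ p) (hq : 2 ≤ q) (f : starGraph p q ≃g starGraph p q) : Equiv.Perm (Fin p) where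
  toFun i := ext' hp (f (some (Sum.inl i)))
  invFun i := ext' hp (f.symm (some (Sum.inl i)))
  left_inv i := by
    have h := apply_inl hp hq f i
    show ext' hp (f.symm (some (Sum.inl (ext' hp (f (some (Sum.inl i))))))) = i
    rw [← h, f.symm_apply_apply, ext'_spec]
  right_inv i := by
    have h := apply_inl hp hq f.symm i
    show ext' hp (f (some (Sum.inl (ext' hp (f.symm (some (Sum.inl i))))))) = i
    rw [← h, f.apply_symm_apply, ext'_spec]

lemma toPerm_spec (hp : 2 ≤ p) (hq : 2 ≤ q) (f : starGraph p q ≃g starGraph p q) (i : Fin p) :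
    f (some (Sum.inl i)) = some (Sum.inl (toPerm hp hq f i)) := apply_inl hp hq f i

/-- the automorphism induced by a permutation of the spikes -/
def autOf (σ : Equiv.Perm (Fin p)) : starGraph p q ≃g starGraph p q where
  toEquiv := Equiv.optionCongr (Equiv.sumCongr σ (Equiv.refl (Fin q)))
  map_rel_iff' := by
    intro u v
    rcases u with _ | (i | j) <;> rcases v with _ | (i' | j') <;>
      simp [starGraph, SimpleGraph.fromRel_adj, Sum.inl.injEq, σ.injective.eq_iff]

noncomputable def toPermHom (hp : 2 ≤ p) (hq : 2 ≤ q) :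
    (starGraph p q ≃g starGraph p q) →* Equiv.Perm (Fin p) where
  toFun := toPerm hp hq
  map_one' := by
    apply Equiv.ext; intro i
    rfl
  map_mul' f g := by
    apply Equiv.ext; intro i
    show ext' hp ((f * g) (some (Sum.inl i))) = ext' hp (f (some (Sum.inl (toPerm hp hq g i))))
    congr 1
    show f (g (some (Sum.inl i))) = _
    rw [toPerm_spec hp hq g i]

end StarAux

/-- For `p, q ≥ 2`, the automorphism group of `Γ_{p,q}` is isomorphic to `Σ_p`. -/
theorem starGraph_aut_iso_perm (p q : ℕ) (hp : 2 ≤ p) (hq : 2 ≤ q) :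
    Nonempty ((starGraph p q ≃g starGraph p q) ≃* Equiv.Perm (Fin p)) := by
  refine ⟨MulEquiv.ofBijective (StarAux.toPermHom hp hq) ⟨?_, ?_⟩⟩
  · intro f g hfg
    apply RelIso.ext
    intro v
    rcases v with _ | (i | j)
    · rw [StarAux.fix_none hp hq f, StarAux.fix_none hp hq g]
    · rw [StarAux.toPerm_spec hp hq f i, StarAux.toPerm_spec hp hq g i]
      have : StarAux.toPerm hp hq f i = StarAux.toPerm hp hq g i :=
        congrFun (congrArg _ hfg) i
      rw [this]
    · rw [StarAux.fix_inr hp hq f _ j rfl, StarAux.fix_inr hp hq g _ j rfl]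
  · intro σ
    refine ⟨StarAux.autOf σ, ?_⟩
    apply Equiv.ext; intro i
    rfl
end

section
/- In the graph Γ_{p,q} with p, q ≥ 2, every graph automorphism fixes each of the tail vertices d_1, d_2, ..., d_q pointwise. -/
lemma sg_adj_inl {p q : ℕ} {i : Fin p} {v : Option (Fin p ⊕ Fin q)}
    (h : (starGraph p q).Adj (some (Sum.inl i)) v) : v = none := by
  rw [starGraph, SimpleGraph.fromRel_adj] at h
  rcases h with ⟨-, h | h⟩ <;> aesop

lemma sg_adj_none {p q : ℕ} {v : Option (Fin p ⊕ Fin q)}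
    (h : (starGraph p q).Adj none v) :
    (∃ i : Fin p, v = some (Sum.inl i)) ∨ ∃ j : Fin q, v = some (Sum.inr j) ∧ (j : ℕ) = 0 := by
  rw [starGraph, SimpleGraph.fromRel_adj] at h
  rcases h with ⟨-, h | h⟩ <;> aesop

lemma sg_adj_inr {p q : ℕ} {j : Fin q} {v : Option (Fin p ⊕ Fin q)}
    (h : (starGraph p q).Adj (some (Sum.inr j)) v) :
    (v = none ∧ (j : ℕ) = 0) ∨
      ∃ k : Fin q, v = some (Sum.inr k) ∧ ((k : ℕ) = (j : ℕ) + 1 ∨ (j : ℕ) = (k : ℕ) + 1) := by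
  rw [starGraph, SimpleGraph.fromRel_adj] at h
  rcases h with ⟨-, h | h⟩ <;> aesop

lemma sg_adj_none_inl {p q : ℕ} (i : Fin p) :
    (starGraph p q).Adj none (some (Sum.inl i)) := by
  rw [starGraph, SimpleGraph.fromRel_adj]
  exact ⟨by simp, Or.inl (Or.inl ⟨rfl, i, rfl⟩)⟩

lemma sg_adj_none_inr0 {p q : ℕ} (hq : 0 < q) :
    (starGraph p q).Adj none (some (Sum.inr ⟨0, hq⟩)) := by
  rw [starGraph, SimpleGraph.fromRel_adj]
  exact ⟨by simp, Or.inl (Or.inr (Or.inl ⟨rfl, ⟨0, hq⟩, rfl, rfl⟩))⟩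

lemma sg_adj_inr_succ {p q : ℕ} (n : ℕ) (h : n + 1 < q) :
    (starGraph p q).Adj (some (Sum.inr ⟨n, Nat.lt_of_succ_lt h⟩)) (some (Sum.inr ⟨n+1, h⟩)) := by
  rw [starGraph, SimpleGraph.fromRel_adj]
  refine ⟨by simp, Or.inl (Or.inr (Or.inr ⟨_, _, rfl, rfl, rfl⟩))⟩

/-- For `p, q ≥ 2`, every automorphism of `Γ_{p,q}` fixes each tail vertex `d_j`. -/
theorem starGraph_aut_fixes_tail (p q : ℕ) (hp : 2 ≤ p) (hq : 2 ≤ q)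
    (f : starGraph p q ≃g starGraph p q) (j : Fin q) :
    f (some (Sum.inr j)) = some (Sum.inr j) := by
  have hq0 : 0 < q := by omega
  -- Step 1: f fixes the center
  have hc0 : f none = none := by
    by_contra hne
    have h1 := (f.map_adj_iff (v := none) (w := some (Sum.inl ⟨0, by omega⟩))).2
      (sg_adj_none_inl _)
    have h2 := (f.map_adj_iff (v := none) (w := some (Sum.inl ⟨1, by omega⟩))).2
      (sg_adj_none_inl _)
    have h3 := (f.map_adj_iff (v := none) (w := some (Sum.inr ⟨0, hq0⟩))).2
      (sg_adj_none_inr0 hq0)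
    have hd12 : f (some (Sum.inl ⟨0, by omega⟩)) ≠ f (some (Sum.inl ⟨1, by omega⟩)) := by
      simp only [ne_eq, EmbeddingLike.apply_eq_iff_eq]; simp
    have hd13 : f (some (Sum.inl ⟨0, by omega⟩)) ≠ f (some (Sum.inr ⟨0, hq0⟩)) := by
      simp only [ne_eq, EmbeddingLike.apply_eq_iff_eq]; simp
    have hd23 : f (some (Sum.inl ⟨1, by omega⟩)) ≠ f (some (Sum.inr ⟨0, hq0⟩)) := by
      simp only [ne_eq, EmbeddingLike.apply_eq_iff_eq]; simp
    obtain ⟨x, hx⟩ : ∃ x, f none = some x := Option.ne_none_iff_exists'.1 hne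
    rw [hx] at h1 h2 h3
    cases x with
    | inl i =>
        have e1 := sg_adj_inl h1
        have e2 := sg_adj_inl h2
        exact hd12 (e1.trans e2.symm)
    | inr k =>
        have e1 := sg_adj_inr h1
        have e2 := sg_adj_inr h2
        have e3 := sg_adj_inr h3
        rcases e1 with ⟨e1, hk1⟩ | ⟨k1, e1, hk1⟩ <;>
          rcases e2 with ⟨e2, hk2⟩ | ⟨k2, e2, hk2⟩ <;>
            rcases e3 with ⟨e3, hk3⟩ | ⟨k3, e3, hk3⟩ <;>
              simp_all [Fin.ext_iff] <;> omega
  -- Step 2 & 3: f fixes the tail, by induction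
  have main : ∀ n, ∀ h : n < q, f (some (Sum.inr ⟨n, h⟩)) = some (Sum.inr ⟨n, h⟩) := by
    intro n
    induction n using Nat.strong_induction_on with
    | _ n ih =>
      intro h
      match n with
      | 0 =>
          have ha := (f.map_adj_iff (v := none) (w := some (Sum.inr ⟨0, h⟩))).2
            (sg_adj_none_inr0 h)
          rw [hc0] at ha
          rcases sg_adj_none ha with ⟨i, hi⟩ | ⟨k, hk, hk0⟩
          · -- f d₀ would be a spike; but d₀ has the non-center neighbor d₁
            exfalso
            have hb := (f.map_adj_iff (v := some (Sum.inr ⟨0, h⟩))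
              (w := some (Sum.inr ⟨1, by omega⟩))).2 (sg_adj_inr_succ 0 (by omega))
            rw [hi] at hb
            have := sg_adj_inl hb
            rw [← hc0] at this
            exact (by simp : (some (Sum.inr ⟨1, by omega⟩) : Option (Fin p ⊕ Fin q)) ≠ none)
              (f.injective this)
          · rw [hk]
            congr 1
            exact congrArg Sum.inr (Fin.ext hk0)
      | m + 1 =>
          have hm : m < q := by omega
          have ihm := ih m (by omega) hm
          have ha := (f.map_adj_iff (v := some (Sum.inr ⟨m, hm⟩))
            (w := some (Sum.inr ⟨m+1, h⟩))).2 (sg_adj_inr_succ m h)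
          rw [ihm] at ha
          rcases sg_adj_inr ha with ⟨hnone, -⟩ | ⟨k, hk, hk1 | hk1⟩
          · exfalso
            rw [← hc0] at hnone
            exact (by simp : (some (Sum.inr ⟨m+1, h⟩) : Option (Fin p ⊕ Fin q)) ≠ none)
              (f.injective hnone)
          · rw [hk]
            congr 1
            exact congrArg Sum.inr (Fin.ext (by simpa using hk1))
          · -- k = m - 1, so f d_{m+1} = f d_{m-1}, contradiction
            exfalso
            have hk1' : m = (k : ℕ) + 1 := hk1
            have hm0 : 0 < m := by omega
            have hkm : (k : ℕ) = m - 1 := by omega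
            have ihk : f (some (Sum.inr ⟨m-1, by omega⟩)) = some (Sum.inr ⟨m-1, by omega⟩) :=
              ih (m-1) (by omega) (by omega)
            have : f (some (Sum.inr ⟨m+1, h⟩)) = f (some (Sum.inr ⟨m-1, by omega⟩)) := by
              rw [hk, ihk]
              congr 1
              exact congrArg Sum.inr (Fin.ext hkm)
            have := f.injective this
            simp [Fin.ext_iff] at this
            omega
  obtain ⟨n, hn⟩ := j
  exact main n hn
end

section
/- For every positive rational number r, there exists a finite commutative monoid M such that |Aut(M)| / |M| = r, where Aut(M) denotes the group of monoid automorphisms of M. -/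
namespace AutRatio

/-- Element type: `none` is the identity, `inl` is a chain, `inr` are null elements. -/
abbrev El (L k : ℕ) : Type := Option (Fin (L + 1) ⊕ Fin k)

namespace El

variable {L k : ℕ}

instance : Finite (El L k) := by unfold El; infer_instance
instance : DecidableEq (El L k) := by unfold El; infer_instance

/-- The identity element. -/
def e : El L k := none
/-- Chain elements. -/
def ch (i : Fin (L + 1)) : El L k := some (Sum.inl i)
/-- Null elements. -/
def nl (x : Fin k) : El L k := some (Sum.inr x)

lemma cases' (a : El L k) : a = e ∨ (∃ i, a = ch i) ∨ ∃ x, a = nl x := by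
  rcases a with _ | (i | x)
  · exact Or.inl rfl
  · exact Or.inr (Or.inl ⟨i, rfl⟩)
  · exact Or.inr (Or.inr ⟨x, rfl⟩)

@[simp] lemma ch_inj {i j : Fin (L+1)} : (ch i : El L k) = ch j ↔ i = j := by
  unfold ch; simp [Sum.inl.injEq]
@[simp] lemma nl_inj {x y : Fin k} : (nl x : El L k) = nl y ↔ x = y := by
  unfold nl; simp [Sum.inr.injEq]
@[simp] lemma ch_ne_e (i : Fin (L+1)) : (ch i : El L k) ≠ e := by unfold ch e; simp
@[simp] lemma nl_ne_e (x : Fin k) : (nl x : El L k) ≠ e := by unfold nl e; simp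
@[simp] lemma e_ne_ch (i : Fin (L+1)) : (e : El L k) ≠ ch i := by unfold ch e; simp
@[simp] lemma e_ne_nl (x : Fin k) : (e : El L k) ≠ nl x := by unfold nl e; simp
@[simp] lemma ch_ne_nl (i : Fin (L+1)) (x : Fin k) : (ch i : El L k) ≠ nl x := by
  unfold ch nl; exact fun h => by injection h with h; exact Sum.inl_ne_inr h
@[simp] lemma nl_ne_ch (x : Fin k) (i : Fin (L+1)) : (nl x : El L k) ≠ ch i := by
  unfold ch nl; exact fun h => by injection h with h; exact Sum.inr_ne_inl h

/-- Multiplication. -/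
def mul : El L k → El L k → El L k
  | none, b => b
  | a, none => a
  | some (.inl i), some (.inl j) => some (.inl (max i j))
  | some _, some _ => some (.inl (Fin.last L))

instance : Mul (El L k) := ⟨mul⟩
instance : One (El L k) := ⟨e⟩

lemma one_def : (1 : El L k) = e := rfl

@[simp] lemma e_mul (b : El L k) : (e : El L k) * b = b := by
  rcases b with _ | (j | y) <;> rfl
@[simp] lemma mul_e (a : El L k) : a * (e : El L k) = a := by
  rcases a with _ | (i | x) <;> rfl
@[simp] lemma ch_mul_ch (i j : Fin (L+1)) : (ch i : El L k) * ch j = ch (max i j) := rfl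
@[simp] lemma nl_mul_ch (x : Fin k) (j : Fin (L+1)) :
    (nl x : El L k) * ch j = ch (Fin.last L) := rfl
@[simp] lemma ch_mul_nl (i : Fin (L+1)) (x : Fin k) :
    (ch i : El L k) * nl x = ch (Fin.last L) := rfl
@[simp] lemma nl_mul_nl (x y : Fin k) : (nl x : El L k) * nl y = ch (Fin.last L) := rfl

instance : CommMonoid (El L k) where
  mul := (· * ·)
  one := e
  one_mul := e_mul
  mul_one := mul_e
  mul_comm a b := by
    rcases cases' a with rfl | ⟨i, rfl⟩ | ⟨x, rfl⟩ <;>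
      rcases cases' b with rfl | ⟨j, rfl⟩ | ⟨y, rfl⟩ <;>
      simp [max_comm]
  mul_assoc a b c := by
    rcases cases' a with rfl | ⟨i, rfl⟩ | ⟨x, rfl⟩ <;>
      rcases cases' b with rfl | ⟨j, rfl⟩ | ⟨y, rfl⟩ <;>
      rcases cases' c with rfl | ⟨l, rfl⟩ | ⟨z, rfl⟩ <;>
      simp [max_assoc, max_eq_left (Fin.le_last _), max_eq_right (Fin.le_last _)]


section Aut

variable {L k : ℕ}

lemma idem_iff (a : El L k) : a * a = a ↔ a = e ∨ ∃ i, a = ch i := by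
  rcases cases' a with rfl | ⟨i, rfl⟩ | ⟨x, rfl⟩ <;> simp

variable (φ : El L k ≃* El L k)

lemma map_e : φ e = e := map_one φ

lemma exists_ch (i : Fin (L + 1)) : ∃ j, φ (ch i) = ch j := by
  have h : φ (ch i) * φ (ch i) = φ (ch i) := by rw [← map_mul]; simp
  rcases (idem_iff _).1 h with h' | ⟨j, h'⟩
  · exact absurd (φ.injective (h'.trans (map_e φ).symm)) (ch_ne_e i)
  · exact ⟨j, h'⟩

noncomputable def chMap (i : Fin (L + 1)) : Fin (L + 1) := (exists_ch φ i).choose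

lemma chMap_spec (i : Fin (L + 1)) : φ (ch i) = ch (chMap φ i) := (exists_ch φ i).choose_spec

lemma ch_le_iff {i j : Fin (L + 1)} : (ch i : El L k) * ch j = ch j ↔ i ≤ j := by
  rw [ch_mul_ch, ch_inj, max_eq_right_iff]

lemma chMap_le_iff {i j : Fin (L + 1)} : chMap φ i ≤ chMap φ j ↔ i ≤ j := by
  rw [← ch_le_iff (k := k), ← ch_le_iff (k := k) (i := i) (j := j),
    ← chMap_spec, ← chMap_spec, ← map_mul, φ.injective.eq_iff]

noncomputable def chIso : Fin (L + 1) ≃o Fin (L + 1) where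
  toFun := chMap φ
  invFun := chMap φ.symm
  left_inv i := by
    have h := chMap_spec φ.symm (chMap φ i)
    rw [← chMap_spec φ i, φ.symm_apply_apply] at h
    exact (ch_inj.1 h).symm
  right_inv i := by
    have h := chMap_spec φ (chMap φ.symm i)
    rw [← chMap_spec φ.symm i, φ.apply_symm_apply] at h
    exact (ch_inj.1 h).symm
  map_rel_iff' := chMap_le_iff φ

lemma chMap_eq_id (i : Fin (L + 1)) : chMap φ i = i := by
  have h : chIso φ = OrderIso.refl (Fin (L + 1)) := Subsingleton.elim _ _
  have : chIso φ i = i := by rw [h]; rfl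
  exact this

lemma map_ch (i : Fin (L + 1)) : φ (ch i) = ch i := by
  rw [chMap_spec φ i, chMap_eq_id]

lemma exists_nl (x : Fin k) : ∃ y, φ (nl x) = nl y := by
  rcases cases' (φ (nl x)) with h | ⟨i, h⟩ | ⟨y, h⟩
  · exact absurd (φ.injective (h.trans (map_e φ).symm)) (nl_ne_e x)
  · exact absurd (φ.injective (h.trans (map_ch φ i).symm)) (nl_ne_ch x i)
  · exact ⟨y, h⟩

noncomputable def nlMap (x : Fin k) : Fin k := (exists_nl φ x).choose

lemma nlMap_spec (x : Fin k) : φ (nl x) = nl (nlMap φ x) := (exists_nl φ x).choose_spec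

noncomputable def nlPerm : Equiv.Perm (Fin k) where
  toFun := nlMap φ
  invFun := nlMap φ.symm
  left_inv x := by
    have h := nlMap_spec φ.symm (nlMap φ x)
    rw [← nlMap_spec φ x, φ.symm_apply_apply] at h
    exact (nl_inj.1 h).symm
  right_inv x := by
    have h := nlMap_spec φ (nlMap φ.symm x)
    rw [← nlMap_spec φ.symm x, φ.apply_symm_apply] at h
    exact (nl_inj.1 h).symm

/-- The underlying equiv of the automorphism determined by a permutation. -/
def permEquiv (σ : Equiv.Perm (Fin k)) : El L k ≃ El L k :=
  Equiv.optionCongr ((Equiv.refl (Fin (L + 1))).sumCongr σ)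

variable (σ : Equiv.Perm (Fin k))

@[simp] lemma permEquiv_e : (permEquiv σ : El L k ≃ El L k) e = e := rfl
@[simp] lemma permEquiv_ch (i : Fin (L + 1)) :
    (permEquiv σ : El L k ≃ El L k) (ch i) = ch i := rfl
@[simp] lemma permEquiv_nl (x : Fin k) :
    (permEquiv σ : El L k ≃ El L k) (nl x) = nl (σ x) := rfl

/-- The automorphism determined by a permutation of the null elements. -/
def ofPerm : El L k ≃* El L k :=
  { (permEquiv σ : El L k ≃ El L k) with
    map_mul' := by
      intro a b
      rcases cases' a with rfl | ⟨i, rfl⟩ | ⟨x, rfl⟩ <;>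
        rcases cases' b with rfl | ⟨j, rfl⟩ | ⟨y, rfl⟩ <;>
        simp [Equiv.toFun_as_coe] }

@[simp] lemma ofPerm_e : (ofPerm σ : El L k ≃* El L k) e = e := rfl
@[simp] lemma ofPerm_ch (i : Fin (L + 1)) :
    (ofPerm σ : El L k ≃* El L k) (ch i) = ch i := rfl
@[simp] lemma ofPerm_nl (x : Fin k) :
    (ofPerm σ : El L k ≃* El L k) (nl x) = nl (σ x) := rfl

/-- Automorphisms are exactly permutations of the null elements. -/
noncomputable def autPerm : (El L k ≃* El L k) ≃ Equiv.Perm (Fin k) where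
  toFun := nlPerm
  invFun := ofPerm
  left_inv φ := by
    ext a
    rcases cases' a with rfl | ⟨i, rfl⟩ | ⟨x, rfl⟩
    · rw [ofPerm_e, map_e]
    · rw [ofPerm_ch, map_ch]
    · rw [ofPerm_nl, nlMap_spec]; rfl
  right_inv σ := by
    refine Equiv.ext fun x => ?_
    have h := nlMap_spec (ofPerm σ (L := L)) x
    rw [ofPerm_nl] at h
    exact (nl_inj.1 h).symm

lemma card_aut : Nat.card (El L k ≃* El L k) = k.factorial := by
  rw [Nat.card_congr (autPerm (L := L) (k := k)), Nat.card_eq_fintype_card,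
    Fintype.card_perm, Fintype.card_fin]

lemma card_el : Nat.card (El L k) = L + k + 2 := by
  rw [Nat.card_eq_fintype_card]
  simp only [El, Fintype.card_option, Fintype.card_sum, Fintype.card_fin]
  omega

end Aut

end El

end AutRatio

/-- For every positive rational `r` there is a finite commutative monoid `M`
with `|Aut(M)| / |M| = r`. -/
theorem exists_commMonoid_aut_card_div_card_eq (r : ℚ) (hr : 0 < r) :
    ∃ (M : Type) (_ : Finite M) (_ : CommMonoid M),
      (Nat.card (M ≃* M) : ℚ) / (Nat.card M : ℚ) = r := by
  set p : ℕ := r.num.toNat with hpdef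
  set q : ℕ := r.den with hqdef
  have hp0 : 0 < p := by
    have := Rat.num_pos.2 hr
    omega
  have hq0 : 0 < q := r.pos
  set k : ℕ := p + 2 with hkdef
  have hdvd : p ∣ k.factorial :=
    dvd_trans (Nat.dvd_factorial hp0 le_rfl) (Nat.factorial_dvd_factorial (by omega))
  set t : ℕ := k.factorial / p with htdef
  have ht : t * p = k.factorial := Nat.div_mul_cancel hdvd
  have hpfac : p ∣ Nat.factorial p := Nat.dvd_factorial hp0 le_rfl
  have hfack : k.factorial = (p + 2) * ((p + 1) * Nat.factorial p) := by
    rw [hkdef]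
    rw [show p + 2 = (p + 1) + 1 from rfl, Nat.factorial_succ, Nat.factorial_succ]
  have ht2 : t = (p + 2) * ((p + 1) * (Nat.factorial p / p)) := by
    rw [htdef, hfack, Nat.mul_div_assoc _ (dvd_mul_of_dvd_right hpfac _),
      Nat.mul_div_assoc _ hpfac]
  have h3 : 1 ≤ Nat.factorial p / p :=
    (Nat.one_le_div_iff hp0).2 (Nat.self_le_factorial p)
  have h5 : (p + 2) * (p + 1) ≤ t := by
    rw [ht2]
    calc (p + 2) * (p + 1) = (p + 2) * ((p + 1) * 1) := by ring
    _ ≤ (p + 2) * ((p + 1) * (Nat.factorial p / p)) := by gcongr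
  have ht4 : p + 4 ≤ t := le_trans (by nlinarith) h5
  have hqt : k + 2 ≤ q * t := by
    calc k + 2 = p + 4 := by omega
    _ ≤ t := ht4
    _ ≤ q * t := Nat.le_mul_of_pos_left t hq0
  refine ⟨AutRatio.El (q * t - (k + 2)) k, inferInstance, inferInstance, ?_⟩
  rw [AutRatio.El.card_aut, AutRatio.El.card_el, show q * t - (k + 2) + k + 2 = q * t by omega]
  have hrpq : r = (p : ℚ) / (q : ℚ) := by
    have hnum : ((p : ℕ) : ℚ) = (r.num : ℚ) := by
      rw [hpdef]
      exact_mod_cast congrArg Int.cast (Int.toNat_of_nonneg (le_of_lt (Rat.num_pos.2 hr)))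
    rw [hnum, hqdef]
    exact (Rat.num_div_den r).symm
  have hqt0 : ((q * t : ℕ) : ℚ) ≠ 0 := by
    have h6 : 0 < q * t := lt_of_lt_of_le (by omega) hqt
    exact_mod_cast h6.ne'
  have hqQ : ((q : ℕ) : ℚ) ≠ 0 := by exact_mod_cast hq0.ne'
  rw [hrpq, div_eq_div_iff hqt0 hqQ]
  have : (k.factorial : ℚ) = (t : ℚ) * (p : ℚ) := by exact_mod_cast ht.symm
  rw [this]
  push_cast
  ring
end

section
/- For every positive rational number r, there exists a finite partially ordered set P such that |Aut(P)| / |P| = r, where Aut(P) is the group of order automorphisms of P. -/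
/-!
The automorphisms of `m` disjoint copies of a finite `k`-element chain are exactly the
permutations of the copies: comparable points lie in the same copy, and a strictly monotone
self-map of a finite chain is the identity. Hence `|Aut P| / |P| = m! / (m k) = (m - 1)! / k`,
and `r = a / q` is attained with `m = a + 1` and `k = (a - 1)! q`.
-/

namespace Sigma

variable {ι : Type*}

theorem fst_eq_of_le {β : ι → Type*} [∀ i, LE (β i)] {x y : Σ i, β i} (h : x ≤ y) :
    x.1 = y.1 :=
  (le_def.1 h).1

variable {α : Type*}

theorem lt_iff_snd_lt_of_fst_eq [LT α] {x y : Σ _ : ι, α} (h : x.1 = y.1) :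
    x < y ↔ x.2 < y.2 := by
  obtain ⟨i, a⟩ := x
  obtain ⟨j, b⟩ := y
  obtain rfl : i = j := h
  exact mk_lt_mk_iff

def orderIsoOfPerm [LE α] (σ : Equiv.Perm ι) : (Σ _ : ι, α) ≃o (Σ _ : ι, α) where
  toFun x := ⟨σ x.1, x.2⟩
  invFun x := ⟨σ.symm x.1, x.2⟩
  left_inv x := by simp
  right_inv x := by simp
  map_rel_iff' {x y} := by
    obtain ⟨i, a⟩ := x
    obtain ⟨j, b⟩ := y
    change (⟨σ i, a⟩ : Σ _ : ι, α) ≤ ⟨σ j, b⟩ ↔ _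
    refine ⟨fun h ↦ ?_, fun h ↦ ?_⟩
    · obtain rfl := σ.injective (fst_eq_of_le h)
      simpa only [mk_le_mk_iff] using h
    · obtain rfl : i = j := fst_eq_of_le h
      simpa only [mk_le_mk_iff] using h

variable [LinearOrder α]

theorem fst_orderIso_apply_mk (f : (Σ _ : ι, α) ≃o (Σ _ : ι, α)) (i : ι) (a b : α) :
    (f ⟨i, a⟩).1 = (f ⟨i, b⟩).1 := by
  rcases le_total a b with hab | hba
  · exact fst_eq_of_le (f.monotone (mk_le_mk_iff.2 hab))
  · exact (fst_eq_of_le (f.monotone (mk_le_mk_iff.2 hba))).symm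

variable [Finite α]

theorem snd_orderIso_apply_mk (f : (Σ _ : ι, α) ≃o (Σ _ : ι, α)) (i : ι) (a : α) :
    (f ⟨i, a⟩).2 = a := by
  have hmono : StrictMono fun b ↦ (f ⟨i, b⟩).2 := fun b c hbc ↦
    (lt_iff_snd_lt_of_fst_eq (fst_orderIso_apply_mk f i b c)).1
      (f.strictMono (mk_lt_mk_iff.2 hbc))
  exact hmono.apply_eq

theorem orderIso_apply_mk (f : (Σ _ : ι, α) ≃o (Σ _ : ι, α)) (i : ι) (a b : α) :
    f ⟨i, a⟩ = ⟨(f ⟨i, b⟩).1, a⟩ :=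
  Sigma.ext (fst_orderIso_apply_mk f i a b) (heq_of_eq (snd_orderIso_apply_mk f i a))

variable [Nonempty α]

noncomputable def orderIsoEquivPerm : ((Σ _ : ι, α) ≃o (Σ _ : ι, α)) ≃ Equiv.Perm ι where
  toFun f :=
    { toFun i := (f ⟨i, Classical.arbitrary α⟩).1
      invFun i := (f.symm ⟨i, Classical.arbitrary α⟩).1
      left_inv i := by
        dsimp only
        rw [f.symm_apply_eq.2 (orderIso_apply_mk f i _ _).symm]
      right_inv i := by
        dsimp only
        rw [← orderIso_apply_mk f.symm i _ _, f.apply_symm_apply] }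
  invFun := orderIsoOfPerm
  left_inv f := RelIso.ext fun x ↦ (orderIso_apply_mk f x.1 x.2 _).symm
  right_inv σ := rfl

theorem card_orderIso [Finite ι] :
    Nat.card ((Σ _ : ι, α) ≃o (Σ _ : ι, α)) = (Nat.card ι).factorial := by
  rw [Nat.card_congr orderIsoEquivPerm, Nat.card_perm]

end Sigma

/-- For every positive rational `r` there is a finite poset `P` with
`|Aut(P)| / |P| = r`. -/
theorem exists_poset_aut_card_div_card_eq (r : ℚ) (hr : 0 < r) :
    ∃ (P : Type) (_ : Finite P) (_ : PartialOrder P),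
      (Nat.card (P ≃o P) : ℚ) / (Nat.card P : ℚ) = r := by
  obtain ⟨a, q, ha, hq, rfl⟩ : ∃ a q : ℕ, a ≠ 0 ∧ q ≠ 0 ∧ r = a / q := by
    refine ⟨r.num.toNat, r.den, by have := Rat.num_pos.2 hr; omega, r.den_ne_zero, ?_⟩
    have hnum : (r.num.toNat : ℚ) = r.num :=
      mod_cast Int.toNat_of_nonneg (Rat.num_nonneg.2 hr.le)
    rw [hnum, Rat.num_div_den]
  have : Nonempty (Fin ((a - 1).factorial * q)) := ⟨⟨0, by positivity⟩⟩
  refine ⟨Σ _ : Fin (a + 1), Fin ((a - 1).factorial * q), inferInstance, inferInstance, ?_⟩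
  simp only [Sigma.card_orderIso, Nat.card_sigma, Nat.card_fin, Finset.sum_const,
    Finset.card_univ, Fintype.card_fin, smul_eq_mul]
  rw [Nat.factorial_succ, ← Nat.mul_factorial_pred ha]
  push_cast
  field_simp
end

section
/- For p, q ≥ 2 and m, n chosen so that p = m, q = n·(m-1)! - m - 1 with m, n ≥ 3, the graph Γ_{p,q} satisfies |Aut(Γ_{p,q})| / |V_{p,q}| = m/n. In particular, the ratio p!/(p+q+1) of the order of the automorphism group to the number of vertices of Γ_{p,q} realizes m/n. -/
open Nat

variable {p q : ℕ}

lemma adj_none_iff {v : Option (Fin p ⊕ Fin q)} :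
    (starGraph p q).Adj none v ↔
      (∃ i : Fin p, v = some (Sum.inl i)) ∨
      (∃ j : Fin q, v = some (Sum.inr j) ∧ (j : ℕ) = 0) := by
  rw [starGraph, SimpleGraph.fromRel_adj]
  constructor
  · rintro ⟨hne, h | h⟩
    · rcases h with ⟨-, i, rfl⟩ | ⟨-, j, rfl, hj⟩ | ⟨a, b, h1, -, -⟩
      · exact Or.inl ⟨i, rfl⟩
      · exact Or.inr ⟨j, rfl, hj⟩
      · exact absurd h1 (by simp)
    · rcases h with ⟨rfl, i, hi⟩ | ⟨rfl, j, hj, -⟩ | ⟨a, b, -, h2, -⟩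
      · exact absurd hi (by simp)
      · exact absurd hj (by simp)
      · exact absurd h2 (by simp)
  · rintro (⟨i, rfl⟩ | ⟨j, rfl, hj⟩)
    · exact ⟨by simp, Or.inl (Or.inl ⟨rfl, i, rfl⟩)⟩
    · exact ⟨by simp, Or.inl (Or.inr (Or.inl ⟨rfl, j, rfl, hj⟩))⟩

lemma adj_inl_iff {i : Fin p} {v : Option (Fin p ⊕ Fin q)} :
    (starGraph p q).Adj (some (Sum.inl i)) v ↔ v = none := by
  rw [starGraph, SimpleGraph.fromRel_adj]
  constructor
  · rintro ⟨hne, h | h⟩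
    · rcases h with ⟨h, -⟩ | ⟨h, -⟩ | ⟨a, b, h1, -, -⟩
      · exact absurd h (by simp)
      · exact absurd h (by simp)
      · exact absurd h1 (by simp)
    · rcases h with ⟨rfl, -⟩ | ⟨rfl, -⟩ | ⟨a, b, -, h2, -⟩
      · rfl
      · rfl
      · exact absurd h2 (by simp)
  · rintro rfl
    exact ⟨by simp, Or.inr (Or.inl ⟨rfl, i, rfl⟩)⟩

lemma adj_inr_iff {j : Fin q} {v : Option (Fin p ⊕ Fin q)} :
    (starGraph p q).Adj (some (Sum.inr j)) v ↔
      (v = none ∧ (j : ℕ) = 0) ∨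
      (∃ k : Fin q, v = some (Sum.inr k) ∧
        ((k : ℕ) = (j : ℕ) + 1 ∨ (j : ℕ) = (k : ℕ) + 1)) := by
  rw [starGraph, SimpleGraph.fromRel_adj]
  constructor
  · rintro ⟨hne, h | h⟩
    · rcases h with ⟨h, -⟩ | ⟨h, -⟩ | ⟨a, b, h1, h2, h3⟩
      · exact absurd h (by simp)
      · exact absurd h (by simp)
      · obtain rfl : j = a := by
          have := Option.some.inj h1
          exact Sum.inr.inj this
        exact Or.inr ⟨b, h2, Or.inl h3⟩
    · rcases h with ⟨rfl, i, hi⟩ | ⟨rfl, a, ha, ha0⟩ | ⟨a, b, h1, h2, h3⟩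
      · exact absurd hi (by simp)
      · obtain rfl : j = a := Sum.inr.inj (Option.some.inj ha)
        exact Or.inl ⟨rfl, ha0⟩
      · obtain rfl : j = b := Sum.inr.inj (Option.some.inj h2)
        exact Or.inr ⟨a, h1, Or.inr h3⟩
  · rintro (⟨rfl, hj⟩ | ⟨k, rfl, hk | hk⟩)
    · exact ⟨by simp, Or.inr (Or.inr (Or.inl ⟨rfl, j, rfl, hj⟩))⟩
    · refine ⟨?_, Or.inl (Or.inr (Or.inr ⟨j, k, rfl, rfl, hk⟩))⟩
      simp only [ne_eq, Option.some.injEq, Sum.inr.injEq]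
      intro h; rw [h] at hk; omega
    · refine ⟨?_, Or.inr (Or.inr (Or.inr ⟨k, j, rfl, rfl, hk⟩))⟩
      simp only [ne_eq, Option.some.injEq, Sum.inr.injEq]
      intro h; rw [h] at hk; omega

open SimpleGraph in
lemma fix_none (hp : 3 ≤ p) (f : starGraph p q ≃g starGraph p q) :
    f none = none := by
  by_contra hne
  set i0 : Fin p := ⟨0, by omega⟩ with hi0
  set i1 : Fin p := ⟨1, by omega⟩ with hi1
  set i2 : Fin p := ⟨2, by omega⟩ with hi2
  have hadj : ∀ t : Fin p, (starGraph p q).Adj (f none) (f (some (Sum.inl t))) := by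
    intro t
    exact f.map_adj_iff.mpr ((adj_inl_iff.mpr rfl).symm)
  obtain ⟨w, hw⟩ := Option.ne_none_iff_exists'.mp hne
  cases w with
  | inl i =>
      have e0 : f (some (Sum.inl i0)) = none := by
        have h := hadj i0; rw [hw] at h; exact adj_inl_iff.mp h
      have e1 : f (some (Sum.inl i1)) = none := by
        have h := hadj i1; rw [hw] at h; exact adj_inl_iff.mp h
      have := f.toEquiv.injective (e0.trans e1.symm)
      simp [hi0, hi1, Fin.ext_iff] at this
  | inr j =>
      have key : ∀ t : Fin p,
          (f (some (Sum.inl t)) = none ∧ (j : ℕ) = 0) ∨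
          (∃ k : Fin q, f (some (Sum.inl t)) = some (Sum.inr k) ∧
            ((k : ℕ) = (j : ℕ) + 1 ∨ (j : ℕ) = (k : ℕ) + 1)) := by
        intro t
        have h := hadj t; rw [hw] at h; exact adj_inr_iff.mp h
      have d01 : f (some (Sum.inl i0)) ≠ f (some (Sum.inl i1)) := by
        intro h; have := f.toEquiv.injective h; simp [hi0, hi1, Fin.ext_iff] at this
      have d02 : f (some (Sum.inl i0)) ≠ f (some (Sum.inl i2)) := by
        intro h; have := f.toEquiv.injective h; simp [hi0, hi2, Fin.ext_iff] at this
      have d12 : f (some (Sum.inl i1)) ≠ f (some (Sum.inl i2)) := by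
        intro h; have := f.toEquiv.injective h; simp [hi1, hi2, Fin.ext_iff] at this
      rcases key i0 with ⟨e0, hj0⟩ | ⟨k0, e0, hk0 | hk0⟩ <;>
        rcases key i1 with ⟨e1, hj1⟩ | ⟨k1, e1, hk1 | hk1⟩ <;>
          rcases key i2 with ⟨e2, hj2⟩ | ⟨k2, e2, hk2 | hk2⟩ <;>
            rw [e0] at d01 d02 <;> rw [e1] at d01 d12 <;> rw [e2] at d02 d12 <;>
              simp only [ne_eq, Option.some.injEq, Sum.inr.injEq, not_true_eq_false,
                Fin.ext_iff] at d01 d02 d12 <;> omega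

lemma fix_spike (hp : 3 ≤ p) (hq : 2 ≤ q) (f : starGraph p q ≃g starGraph p q)
    (i : Fin p) : ∃ i' : Fin p, f (some (Sum.inl i)) = some (Sum.inl i') := by
  have h : (starGraph p q).Adj (f none) (f (some (Sum.inl i))) :=
    f.map_adj_iff.mpr ((adj_inl_iff.mpr rfl).symm)
  rw [fix_none hp f] at h
  rcases adj_none_iff.mp h with ⟨i', e⟩ | ⟨j, e, hj0⟩
  · exact ⟨i', e⟩
  · exfalso
    set j1 : Fin q := ⟨1, by omega⟩ with hj1
    have hadj : (starGraph p q).Adj (some (Sum.inr j)) (some (Sum.inr j1)) :=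
      adj_inr_iff.mpr (Or.inr ⟨j1, rfl, Or.inl (by simp [hj1]; omega)⟩)
    have h2 : (starGraph p q).Adj (f.symm (some (Sum.inr j)))
        (f.symm (some (Sum.inr j1))) := f.symm.map_adj_iff.mpr hadj
    have e' : f.symm (some (Sum.inr j)) = some (Sum.inl i) := by
      rw [← e]; exact f.toEquiv.symm_apply_apply _
    rw [e'] at h2
    have h3 := adj_inl_iff.mp h2
    have h4 := congrArg f h3
    rw [fix_none hp f] at h4
    have h5 : (some (Sum.inr j1) : Option (Fin p ⊕ Fin q)) = none := by
      rw [← h4]; exact (f.toEquiv.apply_symm_apply _).symm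
    simp at h5

lemma fix_tail (hp : 3 ≤ p) (hq : 2 ≤ q) (f : starGraph p q ≃g starGraph p q) :
    ∀ t (ht : t < q), f (some (Sum.inr ⟨t, ht⟩)) = some (Sum.inr ⟨t, ht⟩) := by
  intro t
  induction t using Nat.strong_induction_on with
  | _ t IH =>
    intro ht
    match t, ht with
    | 0, ht =>
      have h : (starGraph p q).Adj (f none) (f (some (Sum.inr ⟨0, ht⟩))) :=
        f.map_adj_iff.mpr ((adj_inr_iff.mpr (Or.inl ⟨rfl, rfl⟩)).symm)
      rw [fix_none hp f] at h
      rcases adj_none_iff.mp h with ⟨i', e⟩ | ⟨k, e, hk0⟩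
      · exfalso
        set j1 : Fin q := ⟨1, by omega⟩ with hj1
        have hadj : (starGraph p q).Adj (some (Sum.inr (⟨0, ht⟩ : Fin q)))
            (some (Sum.inr j1)) :=
          adj_inr_iff.mpr (Or.inr ⟨j1, rfl, Or.inl (by simp [hj1])⟩)
        have h2 := f.map_adj_iff.mpr hadj
        rw [e] at h2
        have h3 := adj_inl_iff.mp h2
        rw [← fix_none hp f] at h3
        have := f.toEquiv.injective h3
        simp at this
      · rw [e]
        congr 1
        exact congrArg Sum.inr (Fin.ext hk0)
    | (s+1), ht =>
      have hslt : s < q := by omega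
      have IHs : f (some (Sum.inr ⟨s, hslt⟩)) = some (Sum.inr ⟨s, hslt⟩) :=
        IH s (by omega) hslt
      have hadj : (starGraph p q).Adj (some (Sum.inr (⟨s+1, ht⟩ : Fin q)))
          (some (Sum.inr (⟨s, hslt⟩ : Fin q))) :=
        adj_inr_iff.mpr (Or.inr ⟨⟨s, hslt⟩, rfl, Or.inr rfl⟩)
      have h2 := f.map_adj_iff.mpr hadj
      rw [IHs] at h2
      rcases adj_inr_iff.mp h2.symm with ⟨e, h0⟩ | ⟨k, e, hk | hk⟩
      · exfalso
        rw [← fix_none hp f] at e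
        have := f.toEquiv.injective e
        simp at this
      · rw [e]
        congr 1
        exact congrArg Sum.inr (Fin.ext (by simpa using hk))
      · exfalso
        have IHk : f (some (Sum.inr ⟨(k : ℕ), k.isLt⟩)) = some (Sum.inr ⟨(k : ℕ), k.isLt⟩) :=
          IH (k : ℕ) (by simp at hk; omega) k.isLt
        rw [Fin.eta] at IHk
        have := f.toEquiv.injective (e.trans IHk.symm)
        simp only [Option.some.injEq, Sum.inr.injEq, Fin.ext_iff] at this hk
        omega

def permToAut (σ : Equiv.Perm (Fin p)) : starGraph p q ≃g starGraph p q where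
  toEquiv := Equiv.optionCongr (Equiv.sumCongr σ (Equiv.refl (Fin q)))
  map_rel_iff' := by
    intro a b
    rcases a with _ | (i | j) <;> rcases b with _ | (i' | j') <;>
      simp [adj_none_iff, adj_inl_iff, adj_inr_iff, SimpleGraph.irrefl] <;>
        first
          | rfl
          | (constructor <;> rintro h <;> simp_all)

lemma card_aut (hp : 3 ≤ p) (hq : 2 ≤ q) :
    Nat.card (starGraph p q ≃g starGraph p q) = p ! := by
  have hbij : Function.Bijective (permToAut : Equiv.Perm (Fin p) →
      (starGraph p q ≃g starGraph p q)) := by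
    constructor
    · intro σ τ h
      apply Equiv.ext
      intro i
      have h2 : (permToAut σ : starGraph p q ≃g starGraph p q) (some (Sum.inl i)) =
          (permToAut τ : starGraph p q ≃g starGraph p q) (some (Sum.inl i)) := by rw [h]
      simpa [permToAut] using h2
    · intro f
      have hg : ∀ i : Fin p, ∃ i', f (some (Sum.inl i)) = some (Sum.inl i') :=
        fix_spike hp hq f
      choose g hgs using hg
      have ginj : Function.Injective g := by
        intro a b hab
        have : f (some (Sum.inl a)) = f (some (Sum.inl b)) := by
          rw [hgs a, hgs b, hab]
        simpa using f.toEquiv.injective this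
      refine ⟨Equiv.ofBijective g (Finite.injective_iff_bijective.mp ginj), ?_⟩
      have : ∀ x, (permToAut (Equiv.ofBijective g
          (Finite.injective_iff_bijective.mp ginj)) :
          starGraph p q ≃g starGraph p q) x = f x := by
        rintro (_ | (i | j))
        · rw [fix_none hp f]
          rfl
        · rw [hgs i]
          rfl
        · have ht := fix_tail hp hq f (j : ℕ) j.isLt
          rw [Fin.eta] at ht
          rw [ht]
          rfl
      exact RelIso.ext this
  rw [← Nat.card_eq_of_bijective _ hbij, Nat.card_eq_fintype_card,
    Fintype.card_perm, Fintype.card_fin]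

lemma card_vert : Nat.card (Option (Fin p ⊕ Fin q)) = p + q + 1 := by
  simp [Nat.card_eq_fintype_card]

/-- For `m, n ≥ 3`, taking `p = m` and `q = n·(m-1)! - m - 1`, the graph `Γ_{p,q}`
satisfies `|Aut(Γ_{p,q})| / |V_{p,q}| = m / n`; in particular the ratio
`p! / (p + q + 1)` realizes `m / n`. -/
theorem starGraph_ratio (m n : ℕ) (hm : 3 ≤ m) (hn : 3 ≤ n) :
    (Nat.card (starGraph m (n * (m - 1)! - m - 1) ≃g starGraph m (n * (m - 1)! - m - 1)) : ℚ) /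
        (Nat.card (Option (Fin m ⊕ Fin (n * (m - 1)! - m - 1))) : ℚ) = (m : ℚ) / n ∧
      (m ! : ℚ) / ((m : ℚ) + ((n * (m - 1)! - m - 1 : ℕ) : ℚ) + 1) = (m : ℚ) / n := by
  set Q := n * (m - 1)! - m - 1 with hQdef
  have hf : m - 1 ≤ (m - 1)! := Nat.self_le_factorial _
  have h3 : 3 * (m - 1) ≤ n * (m - 1)! := Nat.mul_le_mul hn hf
  have hq2 : 2 ≤ Q := by omega
  have hsum : m + Q + 1 = n * (m - 1)! := by omega
  have hfact : m * (m - 1)! = m ! := Nat.mul_factorial_pred (by omega)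
  have hsumQ : (m : ℚ) + (Q : ℚ) + 1 = (n : ℚ) * ((m - 1)! : ℚ) := by
    have h := congrArg (fun k : ℕ => (k : ℚ)) hsum
    push_cast at h
    linarith
  have hne : (((m - 1)! : ℕ) : ℚ) ≠ 0 :=
    Nat.cast_ne_zero.mpr (Nat.factorial_ne_zero _)
  have main : (m ! : ℚ) / ((m : ℚ) + (Q : ℚ) + 1) = (m : ℚ) / n := by
    rw [hsumQ, ← hfact]
    push_cast
    rw [mul_comm ((n : ℚ)) _, mul_comm ((m : ℚ)) _, mul_div_mul_left _ _ hne]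
  refine ⟨?_, main⟩
  rw [card_aut hm hq2, card_vert,
    show ((m + Q + 1 : ℕ) : ℚ) = (m : ℚ) + (Q : ℚ) + 1 by push_cast; ring]
  exact main
end
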